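/- Let λ ≠ μ be positive reals, ν ≥ 0, 0 < α < 1. The solution of the Caputo fractional initial value problem (d^α/dt^α) u(t) = (2λ-2μ-ν) u(t) + 2λ E_α((λ-μ-ν) t^α), u(0) = 0, is u(t) = (2λ/(λ-μ)) [E_α((2λ-2μ-ν) t^α) - E_α((λ-μ-ν) t^α)]. -/

import Mathlib

open Real MeasureTheory Set

/-- Two-parameter Mittag-Leffler function. -/
noncomputable def ML2 (a b t : ℝ) : ℝ := ∑' r : ℕ, t ^ r / Real.Gamma (a * r + b)

/-- One-parameter Mittag-Leffler function `E_a(t)`. -/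
noncomputable def ML1 (a t : ℝ) : ℝ := ML2 a 1 t

/-- Caputo fractional derivative of order `a ∈ (0,1)`. -/
noncomputable def caputo (a : ℝ) (g : ℝ → ℝ) (t : ℝ) : ℝ :=
  (1 / Real.Gamma (1 - a)) * ∫ y in (0 : ℝ)..t, (t - y) ^ (-a) * deriv g y

/-!
Termwise differentiation gives `d/ds E_α(c s^α) = c s^(α-1) E_{α,α}(c s^α)`. Against the
kernel `(t - y)^(-α)` each term of this series is a Beta integral,
`∫₀ᵗ y^(p-1) (t - y)^(-α) dy = Γ(p) Γ(1-α) / Γ(p+1-α) · t^(p-α)`, and summing (the series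
converges absolutely) gives the eigenfunction property `D^α E_α(c t^α) = c E_α(c t^α)`.
The theorem then follows by linearity, because
`(2λ/(λ-μ)) · ((2λ-2μ-ν) - (λ-μ-ν)) = 2λ`.
Convergence of the Mittag-Leffler series is the ratio test, with `Γ(x)/Γ(x+α) → 0` coming from
Gautschi's inequality, itself a consequence of the log-convexity of `Γ`.
-/

open Filter Topology

namespace Real

theorem Gamma_add_one_le_Gamma_add_mul_rpow {x a : ℝ} (hx : 0 < x) (ha : 0 < a) (ha1 : a < 1) :
    Gamma (x + 1) ≤ Gamma (x + a) * (x + a) ^ (1 - a) := by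
  have hxa : 0 < x + a := by linarith
  have hΓ := (Gamma_pos_of_pos hxa).le
  have h := Gamma_mul_add_mul_le_rpow_Gamma_mul_rpow_Gamma hxa (by linarith : 0 < x + a + 1)
    ha (by linarith : 0 < 1 - a) (by ring)
  rw [Gamma_add_one hxa.ne', mul_rpow hxa.le hΓ] at h
  calc Gamma (x + 1) = Gamma (a * (x + a) + (1 - a) * (x + a + 1)) := by ring_nf
    _ ≤ Gamma (x + a) ^ a * ((x + a) ^ (1 - a) * Gamma (x + a) ^ (1 - a)) := h
    _ = Gamma (x + a) * (x + a) ^ (1 - a) := by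
      rw [mul_left_comm, ← rpow_add' hΓ (by norm_num), add_sub_cancel, rpow_one, mul_comm]

theorem tendsto_Gamma_div_Gamma_add {a : ℝ} (ha : 0 < a) (ha1 : a < 1) :
    Tendsto (fun x => Gamma x / Gamma (x + a)) atTop (𝓝 0) := by
  have hlim : Tendsto (fun x => 2 * (x + a) ^ (-a)) atTop (𝓝 0) := by
    simpa using ((tendsto_rpow_neg_atTop ha).comp
      (tendsto_atTop_add_const_right _ a tendsto_id)).const_mul 2
  refine squeeze_zero' ?_ ?_ hlim
  · filter_upwards [eventually_gt_atTop 0] with x hx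
    exact div_nonneg (Gamma_pos_of_pos hx).le (Gamma_pos_of_pos (by linarith)).le
  · filter_upwards [eventually_ge_atTop a] with x hx
    have hx0 : 0 < x := ha.trans_le hx
    have hxa : 0 < x + a := by linarith
    have hΓ := Gamma_pos_of_pos hxa
    rw [div_le_iff₀ hΓ, ← mul_le_mul_iff_of_pos_left hx0]
    calc x * Gamma x = Gamma (x + 1) := (Gamma_add_one hx0.ne').symm
      _ ≤ Gamma (x + a) * (x + a) ^ (1 - a) := Gamma_add_one_le_Gamma_add_mul_rpow hx0 ha ha1
      _ = (x + a) * (x + a) ^ (-a) * Gamma (x + a) := by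
        rw [sub_eq_add_neg, rpow_add hxa, rpow_one]; ring
      _ ≤ x * (2 * (x + a) ^ (-a) * Gamma (x + a)) := by
        have := rpow_pos_of_pos hxa (-a)
        nlinarith [mul_pos this hΓ]

end Real

theorem summable_pow_div_Gamma {a b : ℝ} (ha : 0 < a) (ha1 : a < 1) (hb : 0 < b) (x : ℝ) :
    Summable fun r : ℕ => x ^ r / Gamma (a * r + b) := by
  have hratio : Tendsto (fun n : ℕ => |x| * (Gamma (a * n + b) / Gamma (a * n + b + a)))
      atTop (𝓝 0) := by
    have hlin : Tendsto (fun n : ℕ => a * n + b) atTop atTop :=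
      tendsto_atTop_add_const_right _ b (tendsto_natCast_atTop_atTop.const_mul_atTop ha)
    simpa using ((tendsto_Gamma_div_Gamma_add ha ha1).comp hlin).const_mul |x|
  refine summable_of_ratio_norm_eventually_le one_half_lt_one ?_
  filter_upwards [hratio.eventually_le_const one_half_pos] with n hn
  have hΓ : 0 < Gamma (a * n + b) := Gamma_pos_of_pos (by positivity)
  have hΓ' : 0 < Gamma (a * n + b + a) := Gamma_pos_of_pos (by positivity)
  have hsucc : a * ((n + 1 : ℕ) : ℝ) + b = a * n + b + a := by push_cast; ring
  rw [hsucc, norm_div, norm_div, norm_pow, norm_pow, pow_succ, Real.norm_of_nonneg hΓ.le,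
    Real.norm_of_nonneg hΓ'.le, Real.norm_eq_abs]
  calc |x| ^ n * |x| / Gamma (a * n + b + a)
      = |x| * (Gamma (a * n + b) / Gamma (a * n + b + a)) * (|x| ^ n / Gamma (a * n + b)) := by
        field_simp
    _ ≤ 1 / 2 * (|x| ^ n / Gamma (a * n + b)) := by gcongr

theorem summable_succ_mul_pow_div_Gamma {a b : ℝ} (ha : 0 < a) (ha1 : a < 1) (hb : 0 < b)
    (x : ℝ) :
    Summable fun r : ℕ => ((r : ℝ) + 1) * x ^ r / Gamma (a * ((r : ℝ) + 1) + b) := by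
  refine (summable_pow_div_Gamma ha ha1 (add_pos ha hb) (2 * |x|)).of_norm_bounded fun r => ?_
  have hΓ : 0 < Gamma (a * ((r : ℝ) + 1) + b) := Gamma_pos_of_pos (by positivity)
  have hr : (r : ℝ) + 1 ≤ 2 ^ r := by exact_mod_cast Nat.lt_two_pow_self
  rw [norm_div, norm_mul, norm_pow, Real.norm_of_nonneg hΓ.le, Real.norm_eq_abs,
    Real.norm_eq_abs, abs_of_nonneg (by positivity : (0 : ℝ) ≤ r + 1), mul_pow,
    show a * ((r : ℝ) + 1) + b = a * r + (a + b) by ring]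
  gcongr

theorem ML2_eq_add_tsum {a b : ℝ} (ha : 0 < a) (ha1 : a < 1) (hb : 0 < b) (x : ℝ) :
    ML2 a b x = 1 / Gamma b + ∑' r : ℕ, x ^ (r + 1) / Gamma (a * ((r : ℝ) + 1) + b) := by
  rw [ML2, (summable_pow_div_Gamma ha ha1 hb x).tsum_eq_zero_add]
  push_cast
  simp

theorem hasDerivAt_ML2 {a b : ℝ} (ha : 0 < a) (ha1 : a < 1) (hb : 0 < b) (x : ℝ) :
    HasDerivAt (ML2 a b)
      (∑' r : ℕ, ((r : ℝ) + 1) * x ^ r / Gamma (a * ((r : ℝ) + 1) + b)) x := by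
  set R := |x| + 1
  have hmem : ∀ {z : ℝ}, |z| < R → z ∈ Ioo (-R) R := fun hz => abs_lt.1 hz
  have hterm : ∀ (r : ℕ) (z : ℝ),
      HasDerivAt (fun z => z ^ (r + 1) / Gamma (a * ((r : ℝ) + 1) + b))
        (((r : ℝ) + 1) * z ^ r / Gamma (a * ((r : ℝ) + 1) + b)) z := fun r z => by
    simpa using (hasDerivAt_pow (r + 1) z).div_const (Gamma (a * ((r : ℝ) + 1) + b))
  have hbound : ∀ (r : ℕ), ∀ z ∈ Ioo (-R) R,
      ‖((r : ℝ) + 1) * z ^ r / Gamma (a * ((r : ℝ) + 1) + b)‖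
        ≤ ((r : ℝ) + 1) * R ^ r / Gamma (a * ((r : ℝ) + 1) + b) := fun r z hz => by
    have hΓ : 0 < Gamma (a * ((r : ℝ) + 1) + b) := Gamma_pos_of_pos (by positivity)
    rw [norm_div, norm_mul, norm_pow, Real.norm_of_nonneg hΓ.le,
      Real.norm_of_nonneg (by positivity : (0 : ℝ) ≤ r + 1)]
    gcongr
    exact (abs_lt.2 hz).le
  have htsum := hasDerivAt_tsum_of_isPreconnected
    (summable_succ_mul_pow_div_Gamma ha ha1 hb R) isOpen_Ioo isPreconnected_Ioo
    (fun r z _ => hterm r z) hbound (hmem (z := 0) (by rw [abs_zero]; positivity)) (by simp)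
    (hmem (z := x) (by linarith))
  exact (funext (ML2_eq_add_tsum ha ha1 hb) ▸ htsum.const_add (1 / Gamma b))

theorem hasDerivAt_ML1 {a : ℝ} (ha : 0 < a) (ha1 : a < 1) (x : ℝ) :
    HasDerivAt (ML1 a) (ML2 a a x / a) x := by
  have hderiv : (fun r : ℕ => ((r : ℝ) + 1) * x ^ r / Gamma (a * ((r : ℝ) + 1) + 1))
      = fun r : ℕ => x ^ r / Gamma (a * r + a) / a := funext fun r => by
    have hp : 0 < a * ((r : ℝ) + 1) := by positivity
    rw [Gamma_add_one hp.ne', show a * r + a = a * ((r : ℝ) + 1) by ring]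
    field_simp [(Gamma_pos_of_pos hp).ne']
  rw [ML2, ← tsum_div_const, ← hderiv]
  exact hasDerivAt_ML2 ha ha1 one_pos x

theorem hasDerivAt_ML1_mul_rpow {a : ℝ} (ha : 0 < a) (ha1 : a < 1) (c : ℝ) {y : ℝ}
    (hy : 0 < y) :
    HasDerivAt (fun s => ML1 a (c * s ^ a)) (c * y ^ (a - 1) * ML2 a a (c * y ^ a)) y := by
  have h := (hasDerivAt_ML1 ha ha1 (c * y ^ a)).comp y
    ((hasDerivAt_rpow_const (Or.inl hy.ne')).const_mul c)
  refine h.congr_deriv ?_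
  field_simp

theorem continuous_ML2 {a b : ℝ} (ha : 0 < a) (ha1 : a < 1) (hb : 0 < b) :
    Continuous (ML2 a b) :=
  continuous_iff_continuousAt.2 fun x => (hasDerivAt_ML2 ha ha1 hb x).continuousAt

theorem integral_rpow_mul_rpow_sub {p q t : ℝ} (hp : 0 < p) (hq : 0 < q) (ht : 0 < t) :
    ∫ y in Ioc 0 t, y ^ (p - 1) * (t - y) ^ (q - 1)
      = Gamma p * Gamma q / Gamma (p + q) * t ^ (p + q - 1) := by
  apply Complex.ofReal_injective
  have hbeta := Complex.betaIntegral_eq_Gamma_mul_div (p : ℂ) (q : ℂ) (by simpa) (by simpa)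
  rw [← Complex.ofReal_add, Complex.Gamma_ofReal, Complex.Gamma_ofReal,
    Complex.Gamma_ofReal] at hbeta
  rw [← integral_complex_ofReal, ← intervalIntegral.integral_of_le ht.le]
  calc ∫ y in 0..t, ((y ^ (p - 1) * (t - y) ^ (q - 1) : ℝ) : ℂ)
      = ∫ y in 0..t, (y : ℂ) ^ ((p : ℂ) - 1) * ((t : ℂ) - y) ^ ((q : ℂ) - 1) := by
        refine intervalIntegral.integral_congr fun y hy => ?_
        rw [uIcc_of_le ht.le] at hy
        rw [Complex.ofReal_mul, Complex.ofReal_cpow hy.1, Complex.ofReal_cpow (by linarith [hy.2])]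
        push_cast
        rfl
    _ = _ := by
        rw [Complex.betaIntegral_scaled _ _ ht, hbeta, Complex.ofReal_mul,
          Complex.ofReal_cpow ht.le]
        push_cast
        ring

theorem integrableOn_rpow_mul_rpow_sub {p q t : ℝ} (hp : 0 < p) (hq : 0 < q) (ht : 0 < t) :
    IntegrableOn (fun y => y ^ (p - 1) * (t - y) ^ (q - 1)) (Ioc 0 t) := by
  refine Integrable.of_integral_ne_zero ?_
  rw [integral_rpow_mul_rpow_sub hp hq ht]
  have := Gamma_pos_of_pos hp
  have := Gamma_pos_of_pos hq
  have := Gamma_pos_of_pos (add_pos hp hq)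
  positivity

theorem deriv_ML1_mul_rpow {a : ℝ} (ha : 0 < a) (ha1 : a < 1) (c : ℝ) {y : ℝ} (hy : 0 < y) :
    deriv (fun s => ML1 a (c * s ^ a)) y = c * y ^ (a - 1) * ML2 a a (c * y ^ a) :=
  (hasDerivAt_ML1_mul_rpow ha ha1 c hy).deriv

theorem integrableOn_caputo_integrand_ML1 {a t : ℝ} (ha : 0 < a) (ha1 : a < 1) (c : ℝ)
    (ht : 0 < t) :
    IntegrableOn (fun y => (t - y) ^ (-a) * deriv (fun s => ML1 a (c * s ^ a)) y) (Ioc 0 t) := by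
  have hkernel := integrableOn_rpow_mul_rpow_sub ha (by linarith : 0 < 1 - a) ht
  have hcont : ContinuousOn (fun y => c * ML2 a a (c * y ^ a)) (Icc 0 t) :=
    (continuous_const.mul ((continuous_ML2 ha ha1 ha).comp
      (continuous_const.mul (continuous_rpow_const ha.le)))).continuousOn
  refine (hkernel.mul_continuousOn_of_subset hcont measurableSet_Ioc isCompact_Icc
    Ioc_subset_Icc_self).congr_fun (fun y hy => ?_) measurableSet_Ioc
  rw [deriv_ML1_mul_rpow ha ha1 c hy.1, show 1 - a - 1 = -a by ring]
  ring

theorem integral_caputo_integrand_ML1 {a t : ℝ} (ha : 0 < a) (ha1 : a < 1) (c : ℝ)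
    (ht : 0 < t) :
    ∫ y in Ioc 0 t, (t - y) ^ (-a) * deriv (fun s => ML1 a (c * s ^ a)) y
      = Gamma (1 - a) * (c * ML1 a (c * t ^ a)) := by
  set φ : ℕ → ℝ → ℝ := fun r y => y ^ (a * r + a - 1) * (t - y) ^ (1 - a - 1)
  set F : ℕ → ℝ → ℝ := fun r y => c ^ (r + 1) / Gamma (a * r + a) * φ r y
  have hΓ : ∀ r : ℕ, 0 < Gamma (a * r + a) := fun r => Gamma_pos_of_pos (by positivity)
  have hφ_int : ∀ r : ℕ, IntegrableOn (φ r) (Ioc 0 t) := fun r =>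
    integrableOn_rpow_mul_rpow_sub (by positivity) (by linarith) ht
  have hφ : ∀ r : ℕ, ∫ y in Ioc 0 t, φ r y
      = Gamma (a * r + a) * Gamma (1 - a) / Gamma (a * r + 1) * t ^ (a * r) := fun r => by
    rw [integral_rpow_mul_rpow_sub (by positivity) (by linarith) ht]
    ring_nf
  have hF : ∀ (d : ℝ) (r : ℕ), d ^ (r + 1) / Gamma (a * r + a) * ∫ y in Ioc 0 t, φ r y
      = Gamma (1 - a) * d * ((d * t ^ a) ^ r / Gamma (a * r + 1)) := fun d r => by
    rw [hφ, mul_pow, ← rpow_mul_natCast ht.le]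
    field_simp [(hΓ r).ne']
    ring
  have hF_norm : ∀ r : ℕ, ∫ y in Ioc 0 t, ‖F r y‖
      = Gamma (1 - a) * |c| * ((|c| * t ^ a) ^ r / Gamma (a * r + 1)) := fun r => by
    rw [← hF, ← integral_const_mul]
    refine setIntegral_congr_fun measurableSet_Ioc fun y hy => ?_
    have : 0 ≤ φ r y := mul_nonneg (rpow_nonneg hy.1.le _) (rpow_nonneg (by linarith [hy.2]) _)
    rw [norm_mul, norm_div, norm_pow, Real.norm_of_nonneg (hΓ r).le, Real.norm_of_nonneg this,
      Real.norm_eq_abs]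
  have hseries : ∀ y ∈ Ioc 0 t,
      (t - y) ^ (-a) * deriv (fun s => ML1 a (c * s ^ a)) y = ∑' r, F r y := fun y hy => by
    rw [deriv_ML1_mul_rpow ha ha1 c hy.1, ML2, ← tsum_mul_left, ← tsum_mul_left]
    refine tsum_congr fun r => ?_
    simp only [F, φ]
    rw [show a * r + a - 1 = a * r + (a - 1) by ring, rpow_add hy.1, rpow_mul_natCast hy.1.le,
      show 1 - a - 1 = -a by ring]
    ring
  have hsum := hasSum_integral_of_summable_integral_norm (F := F) (fun r => (hφ_int r).const_mul _)
    (by simpa only [hF_norm] using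
      (summable_pow_div_Gamma ha ha1 one_pos (|c| * t ^ a)).mul_left (Gamma (1 - a) * |c|))
  rw [setIntegral_congr_fun measurableSet_Ioc hseries, ← hsum.tsum_eq]
  simp only [F, integral_const_mul, hF]
  rw [tsum_mul_left, ML1, ML2]
  ring

theorem caputo_ML1_mul_rpow {a t : ℝ} (ha : 0 < a) (ha1 : a < 1) (c : ℝ) (ht : 0 < t) :
    caputo a (fun s => ML1 a (c * s ^ a)) t = c * ML1 a (c * t ^ a) := by
  rw [caputo, intervalIntegral.integral_of_le ht.le, integral_caputo_integrand_ML1 ha ha1 c ht,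
    one_div, inv_mul_cancel_left₀ (Gamma_pos_of_pos (by linarith)).ne']

theorem caputo_const_mul_sub {a t : ℝ} (ht : 0 ≤ t) (k : ℝ) {f g : ℝ → ℝ}
    (hf : ∀ y ∈ Ioc 0 t, DifferentiableAt ℝ f y)
    (hg : ∀ y ∈ Ioc 0 t, DifferentiableAt ℝ g y)
    (hf_int : IntegrableOn (fun y => (t - y) ^ (-a) * deriv f y) (Ioc 0 t))
    (hg_int : IntegrableOn (fun y => (t - y) ^ (-a) * deriv g y) (Ioc 0 t)) :
    caputo a (fun s => k * (f s - g s)) t = k * (caputo a f t - caputo a g t) := by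
  have hderiv : ∀ y ∈ Ioc 0 t, (t - y) ^ (-a) * deriv (fun s => k * (f s - g s)) y
      = k * ((t - y) ^ (-a) * deriv f y) - k * ((t - y) ^ (-a) * deriv g y) := fun y hy => by
    have h : HasDerivAt (fun s => k * (f s - g s)) (k * (deriv f y - deriv g y)) y :=
      ((hf y hy).hasDerivAt.sub (hg y hy).hasDerivAt).const_mul k
    rw [h.deriv]
    ring
  simp only [caputo, intervalIntegral.integral_of_le ht]
  rw [setIntegral_congr_fun measurableSet_Ioc hderiv,
    integral_sub (hf_int.const_mul k) (hg_int.const_mul k), integral_const_mul, integral_const_mul]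
  ring

theorem second_factorial_moment_solves_fde_general
    (lam mu ν a : ℝ) (hne : lam ≠ mu)
    (ha : 0 < a) (ha1 : a < 1) :
    (∀ t > (0 : ℝ),
      caputo a (fun s => (2 * lam / (lam - mu)) *
          (ML1 a ((2 * lam - 2 * mu - ν) * s ^ a) - ML1 a ((lam - mu - ν) * s ^ a))) t
        = (2 * lam - 2 * mu - ν) * ((2 * lam / (lam - mu)) *
            (ML1 a ((2 * lam - 2 * mu - ν) * t ^ a) - ML1 a ((lam - mu - ν) * t ^ a)))
          + 2 * lam * ML1 a ((lam - mu - ν) * t ^ a)) ∧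
    (2 * lam / (lam - mu)) *
        (ML1 a ((2 * lam - 2 * mu - ν) * (0 : ℝ) ^ a)
          - ML1 a ((lam - mu - ν) * (0 : ℝ) ^ a)) = 0 := by
  refine ⟨fun t ht => ?_, by rw [zero_rpow ha.ne', mul_zero, mul_zero, sub_self, mul_zero]⟩
  have hdiff : ∀ c, ∀ y ∈ Ioc 0 t, DifferentiableAt ℝ (fun s => ML1 a (c * s ^ a)) y :=
    fun c y hy => (hasDerivAt_ML1_mul_rpow ha ha1 c hy.1).differentiableAt
  rw [caputo_const_mul_sub ht.le _ (hdiff _) (hdiff _)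
      (integrableOn_caputo_integrand_ML1 ha ha1 _ ht)
      (integrableOn_caputo_integrand_ML1 ha ha1 _ ht),
    caputo_ML1_mul_rpow ha ha1 _ ht, caputo_ML1_mul_rpow ha ha1 _ ht]
  field_simp [sub_ne_zero.2 hne]
  ring

theorem second_factorial_moment_solves_fde
    (lam mu ν a : ℝ) (hlam : 0 < lam) (hmu : 0 < mu) (hne : lam ≠ mu)
    (hν : 0 ≤ ν) (ha : 0 < a) (ha1 : a < 1) :
    (∀ t > (0 : ℝ),
      caputo a (fun s => (2 * lam / (lam - mu)) *
          (ML1 a ((2 * lam - 2 * mu - ν) * s ^ a) - ML1 a ((lam - mu - ν) * s ^ a))) t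
        = (2 * lam - 2 * mu - ν) * ((2 * lam / (lam - mu)) *
            (ML1 a ((2 * lam - 2 * mu - ν) * t ^ a) - ML1 a ((lam - mu - ν) * t ^ a)))
          + 2 * lam * ML1 a ((lam - mu - ν) * t ^ a)) ∧
    (2 * lam / (lam - mu)) *
        (ML1 a ((2 * lam - 2 * mu - ν) * (0 : ℝ) ^ a)
          - ML1 a ((lam - mu - ν) * (0 : ℝ) ^ a)) = 0 :=
  second_factorial_moment_solves_fde_general lam mu ν a hne ha ha1
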